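/- Let α, β > 0 with α + β < 1 and let f : ℝ² → ℝ be 2π-periodic in each variable with Σ_{j=1}^∞ v_s#(2^j,f) / 2^{j(1−(α+β))} < ∞ for s = 1,2. Then f ∈ C{n^{1−(α+β)}}#V, i.e. f is continuous in Λ#-variation for the sequence λ_n = n^{1−(α+β)}. -/

import Mathlib

open scoped ENNReal BigOperators
open Filter Set

noncomputable section

/-- A collection of `n` pairwise nonoverlapping subintervals of `T = [0, 2π]`,
given as pairs of endpoints. -/
def NonoverlapIcc (n : ℕ) (I : Fin n → ℝ × ℝ) : Prop :=
  (∀ i, 0 ≤ (I i).1 ∧ (I i).1 < (I i).2 ∧ (I i).2 ≤ 2 * Real.pi) ∧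
    ∀ i j, i ≠ j → (I i).2 ≤ (I j).1 ∨ (I j).2 ≤ (I i).1

/-- `f : ℝ² → ℝ` (curried) is `2π`-periodic in each variable. -/
def Periodic2 (f : ℝ → ℝ → ℝ) : Prop :=
  ∀ x y : ℝ, f (x + 2 * Real.pi) y = f x y ∧ f x (y + 2 * Real.pi) = f x y

/-- `ΛV₁(f)`: partial `Λ`-variation in the first variable. -/
def LamV1 (Λ : ℕ → ℝ) (f : ℝ → ℝ → ℝ) : ℝ≥0∞ :=
  ⨆ (y ∈ Icc (0:ℝ) (2 * Real.pi)) (n : ℕ) (I : Fin n → ℝ × ℝ) (_ : NonoverlapIcc n I),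
    ENNReal.ofReal (∑ i, |f (I i).2 y - f (I i).1 y| / Λ ((i : ℕ) + 1))

/-- `ΛV₂(f)`: partial `Λ`-variation in the second variable. -/
def LamV2 (Λ : ℕ → ℝ) (f : ℝ → ℝ → ℝ) : ℝ≥0∞ :=
  ⨆ (x ∈ Icc (0:ℝ) (2 * Real.pi)) (m : ℕ) (J : Fin m → ℝ × ℝ) (_ : NonoverlapIcc m J),
    ENNReal.ofReal (∑ j, |f x (J j).2 - f x (J j).1| / Λ ((j : ℕ) + 1))

/-- `ΛV₁,₂(f)`: mixed `Λ`-variation. -/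
def LamV12 (Λ : ℕ → ℝ) (f : ℝ → ℝ → ℝ) : ℝ≥0∞ :=
  ⨆ (n : ℕ) (m : ℕ) (I : Fin n → ℝ × ℝ) (J : Fin m → ℝ × ℝ)
    (_ : NonoverlapIcc n I) (_ : NonoverlapIcc m J),
    ENNReal.ofReal (∑ i, ∑ j,
      |f (I i).1 (J j).1 - f (I i).1 (J j).2 - f (I i).2 (J j).1 + f (I i).2 (J j).2| /
        (Λ ((i : ℕ) + 1) * Λ ((j : ℕ) + 1)))

/-- Total harmonic variation `HV(f) = HV₁(f) + HV₂(f) + HV₁,₂(f)` (with `λ_n = n`).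
`f ∈ HBV` iff `HarmonicV f ≠ ⊤`. -/
def HarmonicV (f : ℝ → ℝ → ℝ) : ℝ≥0∞ :=
  LamV1 (fun n => (n : ℝ)) f + LamV2 (fun n => (n : ℝ)) f + LamV12 (fun n => (n : ℝ)) f

/-- `Λ#V₁(f)`. -/
def LamSharpV1 (Λ : ℕ → ℝ) (f : ℝ → ℝ → ℝ) : ℝ≥0∞ :=
  ⨆ (n : ℕ) (I : Fin n → ℝ × ℝ) (y : Fin n → ℝ)
    (_ : NonoverlapIcc n I) (_ : ∀ i, y i ∈ Icc (0:ℝ) (2 * Real.pi)),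
    ENNReal.ofReal (∑ i, |f (I i).2 (y i) - f (I i).1 (y i)| / Λ ((i : ℕ) + 1))

/-- `Λ#V₂(f)`. -/
def LamSharpV2 (Λ : ℕ → ℝ) (f : ℝ → ℝ → ℝ) : ℝ≥0∞ :=
  ⨆ (m : ℕ) (J : Fin m → ℝ × ℝ) (x : Fin m → ℝ)
    (_ : NonoverlapIcc m J) (_ : ∀ j, x j ∈ Icc (0:ℝ) (2 * Real.pi)),
    ENNReal.ofReal (∑ j, |f (x j) (J j).2 - f (x j) (J j).1| / Λ ((j : ℕ) + 1))

/-- A collection of `n` pairwise nonoverlapping rectangles `[α,β] × [γ,δ] ⊆ T²`,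
encoded as `((α, β), (γ, δ))`. -/
def NonoverlapRect (n : ℕ) (A : Fin n → (ℝ × ℝ) × (ℝ × ℝ)) : Prop :=
  (∀ k, 0 ≤ (A k).1.1 ∧ (A k).1.1 < (A k).1.2 ∧ (A k).1.2 ≤ 2 * Real.pi ∧
        0 ≤ (A k).2.1 ∧ (A k).2.1 < (A k).2.2 ∧ (A k).2.2 ≤ 2 * Real.pi) ∧
    ∀ k l, k ≠ l →
      Disjoint (Ioo (A k).1.1 (A k).1.2 ×ˢ Ioo (A k).2.1 (A k).2.2)
        (Ioo (A l).1.1 (A l).1.2 ×ˢ Ioo (A l).2.1 (A l).2.2)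

/-- `Λ*V(f)` of Dyachenko–Waterman. -/
def LamStarV (Λ : ℕ → ℝ) (f : ℝ → ℝ → ℝ) : ℝ≥0∞ :=
  ⨆ (n : ℕ) (A : Fin n → (ℝ × ℝ) × (ℝ × ℝ)) (_ : NonoverlapRect n A),
    ENNReal.ofReal (∑ k,
      |f (A k).1.1 (A k).2.1 - f (A k).1.1 (A k).2.2 -
        f (A k).1.2 (A k).2.1 + f (A k).1.2 (A k).2.2| / Λ ((k : ℕ) + 1))

/-- Partial `p`-variation (first variable); with `Φ(u) = u^p`. -/
def PV1pow (p : ℝ) (f : ℝ → ℝ → ℝ) : ℝ≥0∞ :=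
  ⨆ (y ∈ Icc (0:ℝ) (2 * Real.pi)) (n : ℕ) (I : Fin n → ℝ × ℝ) (_ : NonoverlapIcc n I),
    ENNReal.ofReal (∑ i, |f (I i).2 y - f (I i).1 y| ^ p)

/-- Partial `p`-variation (second variable). -/
def PV2pow (p : ℝ) (f : ℝ → ℝ → ℝ) : ℝ≥0∞ :=
  ⨆ (x ∈ Icc (0:ℝ) (2 * Real.pi)) (m : ℕ) (J : Fin m → ℝ × ℝ) (_ : NonoverlapIcc m J),
    ENNReal.ofReal (∑ j, |f x (J j).2 - f x (J j).1| ^ p)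

/-- `V#_{Φ,1}(f)` for the class `B#V_Φ`. -/
def PhiSharpV1 (Φ : ℝ → ℝ) (f : ℝ → ℝ → ℝ) : ℝ≥0∞ :=
  ⨆ (n : ℕ) (I : Fin n → ℝ × ℝ) (y : Fin n → ℝ)
    (_ : NonoverlapIcc n I) (_ : ∀ i, y i ∈ Icc (0:ℝ) (2 * Real.pi)),
    ENNReal.ofReal (∑ i, Φ |f (I i).2 (y i) - f (I i).1 (y i)|)

/-- `V#_{Φ,2}(f)` for the class `B#V_Φ`. -/
def PhiSharpV2 (Φ : ℝ → ℝ) (f : ℝ → ℝ → ℝ) : ℝ≥0∞ :=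
  ⨆ (m : ℕ) (J : Fin m → ℝ × ℝ) (x : Fin m → ℝ)
    (_ : NonoverlapIcc m J) (_ : ∀ j, x j ∈ Icc (0:ℝ) (2 * Real.pi)),
    ENNReal.ofReal (∑ j, Φ |f (x j) (J j).2 - f (x j) (J j).1|)

/-- Partial modulus of variation `v₁(n, f)`. -/
def modV1 (f : ℝ → ℝ → ℝ) (n : ℕ) : ℝ≥0∞ :=
  ⨆ (y ∈ Icc (0:ℝ) (2 * Real.pi)) (I : Fin n → ℝ × ℝ) (_ : NonoverlapIcc n I),
    ENNReal.ofReal (∑ i, |f (I i).2 y - f (I i).1 y|)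

/-- Partial modulus of variation `v₂(m, f)`. -/
def modV2 (f : ℝ → ℝ → ℝ) (m : ℕ) : ℝ≥0∞ :=
  ⨆ (x ∈ Icc (0:ℝ) (2 * Real.pi)) (J : Fin m → ℝ × ℝ) (_ : NonoverlapIcc m J),
    ENNReal.ofReal (∑ j, |f x (J j).2 - f x (J j).1|)

/-- `v₁#(n, f)`. -/
def modSharpV1 (f : ℝ → ℝ → ℝ) (n : ℕ) : ℝ≥0∞ :=
  ⨆ (I : Fin n → ℝ × ℝ) (y : Fin n → ℝ)
    (_ : NonoverlapIcc n I) (_ : ∀ i, y i ∈ Icc (0:ℝ) (2 * Real.pi)),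
    ENNReal.ofReal (∑ i, |f (I i).2 (y i) - f (I i).1 (y i)|)

/-- `v₂#(m, f)`. -/
def modSharpV2 (f : ℝ → ℝ → ℝ) (m : ℕ) : ℝ≥0∞ :=
  ⨆ (J : Fin m → ℝ × ℝ) (x : Fin m → ℝ)
    (_ : NonoverlapIcc m J) (_ : ∀ j, x j ∈ Icc (0:ℝ) (2 * Real.pi)),
    ENNReal.ofReal (∑ j, |f (x j) (J j).2 - f (x j) (J j).1|)

/-- The shifted sequence `Λ_n = {λ_k}_{k=n}^∞`: its `i`-th member (`i ≥ 1`) is `λ_{n+i-1}`. -/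
def ShiftSeq (Λ : ℕ → ℝ) (n : ℕ) : ℕ → ℝ := fun k => Λ (k + n - 1)

/-- The sequence `λ_n = n / log n` (for `n ≥ 2`; the value at `n ≤ 1` is irrelevant). -/
def nlogSeq : ℕ → ℝ := fun n => if n ≤ 1 then 1 else (n : ℝ) / Real.log n

/-- Double Fourier coefficient
`f̂(m,n) = (1/(4π²)) ∫₀^{2π}∫₀^{2π} f(x,y) e^{-imx} e^{-iny} dx dy`. -/
def fCoef (f : ℝ → ℝ → ℝ) (m n : ℤ) : ℂ :=
  (4 * (Real.pi : ℂ) ^ 2)⁻¹ *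
    ∫ x in (0:ℝ)..(2 * Real.pi), ∫ y in (0:ℝ)..(2 * Real.pi),
      (f x y : ℂ) * Complex.exp (-(Complex.I * (m : ℂ) * (x : ℂ))) *
        Complex.exp (-(Complex.I * (n : ℂ) * (y : ℂ)))

/-- Rectangular partial sum `S_{M,N}[f,(x,y)]` of the double Fourier series. -/
def SRect (f : ℝ → ℝ → ℝ) (M N : ℕ) (x y : ℝ) : ℂ :=
  ∑ m ∈ Finset.Icc (-(M : ℤ)) (M : ℤ), ∑ n ∈ Finset.Icc (-(N : ℤ)) (N : ℤ),
    fCoef f m n * Complex.exp (Complex.I * (m : ℂ) * (x : ℂ)) *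
      Complex.exp (Complex.I * (n : ℂ) * (y : ℂ))

/-- One-sided punctured neighborhood filter: from the right if `s = true`,
from the left if `s = false`. -/
def sideF (x : ℝ) (s : Bool) : Filter ℝ :=
  if s then nhdsWithin x (Ioi x) else nhdsWithin x (Iio x)

/-- `HasQuadLim f x y s t L` means the open-quadrant limit of `f` at `(x,y)` from the
quadrant with horizontal direction `s` and vertical direction `t` exists and equals `L`
(e.g. `s = true, t = false` is `f(x+0, y-0)`). -/
def HasQuadLim (f : ℝ → ℝ → ℝ) (x y : ℝ) (s t : Bool) (L : ℝ) : Prop :=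
  Tendsto (fun p : ℝ × ℝ => f p.1 p.2) ((sideF x s) ×ˢ (sideF y t)) (nhds L)

/-- Cesàro numbers `A_k^α = (α+1)(α+2)⋯(α+k)/k!`. -/
def AA (α : ℝ) : ℕ → ℝ
  | 0 => 1
  | k + 1 => AA α k * (α + ((k : ℝ) + 1)) / ((k : ℝ) + 1)

/-- Cesàro `(C; α, β)` means of the double Fourier series of `f`. -/
def cesaro (f : ℝ → ℝ → ℝ) (α β : ℝ) (n m : ℕ) (x y : ℝ) : ℂ :=
  ((1 / (AA α n * AA β m) : ℝ) : ℂ) *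
    ∑ i ∈ Finset.range (n + 1), ∑ j ∈ Finset.range (m + 1),
      ((AA (α - 1) (n - i) * AA (β - 1) (m - j) : ℝ) : ℂ) * SRect f i j x y

end

/-! Put `δ = 1 - (α + β) > 0`. In a sum `Σ_i |f(I_i, y_i)| / (i + n)^δ` the first `2^J` terms
contribute at most `v₁#(2^J, f) / n^δ`, and the dyadic block `2^j ≤ i < 2^(j+1)` at most
`v₁#(2^(j+1), f) / 2^(jδ)`. Hence
`Λ_n#V₁(f) ≤ v₁#(2^J, f) / n^δ + 2^δ Σ_{j ≥ J} v₁#(2^(j+1), f) / 2^((j+1)δ)`: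
`n = 1` gives finiteness, and letting `n → ∞` and then `J → ∞` gives `Λ_n#V₁(f) → 0`.
The second variable is the first one of the transposed function. -/

open scoped Topology

theorem NonoverlapIcc.refine {m n : ℕ} {I : Fin n → ℝ × ℝ} {I' : Fin m → ℝ × ℝ}
    (hI : NonoverlapIcc n I) (g : Fin m → Fin n)
    (hsub : ∀ i, (I (g i)).1 ≤ (I' i).1 ∧ (I' i).1 < (I' i).2 ∧ (I' i).2 ≤ (I (g i)).2)
    (hfib : ∀ i j, i ≠ j → g i = g j → (I' i).2 ≤ (I' j).1 ∨ (I' j).2 ≤ (I' i).1) :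
    NonoverlapIcc m I' := by
  refine ⟨fun i => ?_, fun i j hij => ?_⟩
  · obtain ⟨h0, -, h2π⟩ := hI.1 (g i)
    obtain ⟨hl, hlt, hr⟩ := hsub i
    exact ⟨h0.trans hl, hlt, hr.trans h2π⟩
  by_cases hg : g i = g j
  · exact hfib i j hij hg
  rcases hI.2 _ _ hg with h | h
  · exact .inl ((hsub i).2.2.trans (h.trans (hsub j).1))
  · exact .inr ((hsub j).2.2.trans (h.trans (hsub i).1))

theorem ofReal_sum_le_modSharpV1 (f : ℝ → ℝ → ℝ) {n : ℕ} {I : Fin n → ℝ × ℝ} {y : Fin n → ℝ}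
    (hI : NonoverlapIcc n I) (hy : ∀ i, y i ∈ Icc 0 (2 * Real.pi)) :
    ENNReal.ofReal (∑ i, |f (I i).2 (y i) - f (I i).1 (y i)|) ≤ modSharpV1 f n :=
  le_iSup_of_le I <| le_iSup_of_le y <| le_iSup_of_le hI <| le_iSup_of_le hy le_rfl

theorem modSharpV1_le_succ (f : ℝ → ℝ → ℝ) (n : ℕ) :
    modSharpV1 f n ≤ modSharpV1 f (n + 1) := by
  refine iSup_le fun I => iSup_le fun y => iSup_le fun hI => iSup_le fun hy => ?_
  cases n with
  | zero => simp
  | succ k =>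
    -- split the first interval `(a, b)` at its midpoint `c`
    set a := (I 0).1
    set b := (I 0).2
    set c := (a + b) / 2
    have hab : a < b := (hI.1 0).2.1
    have hac : a < c := by simp only [c]; linarith
    have hcb : c < b := by simp only [c]; linarith
    let g : Fin (k + 2) → Fin (k + 1) := Fin.cons 0 id
    let I' : Fin (k + 2) → ℝ × ℝ := Fin.cons (a, c) (Function.update I 0 (c, b))
    have hI' : NonoverlapIcc (k + 2) I' := by
      refine hI.refine g (fun i => ?_) fun i j hij hg => ?_
      · refine Fin.cases ⟨le_rfl, hac, hcb.le⟩ (fun i => ?_) i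
        by_cases hi : i = 0
        · subst hi
          simp only [I', g, Fin.cons_succ, Function.update_self, id]
          exact ⟨hac.le, hcb, le_rfl⟩
        · simp only [I', g, Fin.cons_succ, Function.update_of_ne hi, id]
          exact ⟨le_rfl, (hI.1 i).2.1, le_rfl⟩
      · induction i using Fin.cases <;> induction j using Fin.cases <;>
          simp_all [I', g]
    refine (ENNReal.ofReal_le_ofReal ?_).trans
      (ofReal_sum_le_modSharpV1 f (y := y ∘ g) hI' fun i => hy (g i))
    simp only [Fin.sum_univ_succ, I', g, Function.comp, Fin.cons_zero, Fin.cons_succ,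
      Function.update_self, id, ne_eq, Fin.succ_ne_zero, not_false_eq_true,
      Function.update_of_ne]
    linarith [abs_sub_le (f b (y 0)) (f c (y 0)) (f a (y 0))]

theorem modSharpV1_mono (f : ℝ → ℝ → ℝ) : Monotone (modSharpV1 f) :=
  monotone_nat_of_le_succ (modSharpV1_le_succ f)

theorem sum_ofReal_le_modSharpV1 (f : ℝ → ℝ → ℝ) {N : ℕ} {I : Fin N → ℝ × ℝ} {y : Fin N → ℝ}
    (hI : NonoverlapIcc N I) (hy : ∀ i, y i ∈ Icc 0 (2 * Real.pi))
    {S : Finset (Fin N)} {M : ℕ} (hS : S.card ≤ M) :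
    ∑ i ∈ S, ENNReal.ofReal |f (I i).2 (y i) - f (I i).1 (y i)| ≤ modSharpV1 f M := by
  let e := S.orderEmbOfFin rfl
  have hI' : NonoverlapIcc S.card (I ∘ e) :=
    hI.refine e (fun _ => ⟨le_rfl, (hI.1 _).2.1, le_rfl⟩) fun i j hij h => (hij (e.inj' h)).elim
  rw [← ENNReal.ofReal_sum_of_nonneg fun _ _ => abs_nonneg _, ← S.map_orderEmbOfFin_univ rfl,
    Finset.sum_map]
  exact (ofReal_sum_le_modSharpV1 f hI' fun i => hy (e i)).trans (modSharpV1_mono f hS)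

theorem Finset.card_le_of_forall_val_lt {N M : ℕ} {S : Finset (Fin N)}
    (h : ∀ i ∈ S, (i : ℕ) < M) : S.card ≤ M := by
  simpa using Finset.card_le_card_of_injOn (t := Finset.range M) (fun i : Fin N => (i : ℕ))
    (fun i hi => Finset.mem_range.2 (h i hi)) Fin.val_injective.injOn

theorem sum_mul_le_dyadic {N : ℕ} (d : Fin N → ℝ≥0∞) {w : ℕ → ℝ≥0∞} (hw : Antitone w)
    {V : ℕ → ℝ≥0∞} (hV : ∀ (S : Finset (Fin N)) (M : ℕ), S.card ≤ M → ∑ i ∈ S, d i ≤ V M)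
    (J : ℕ) :
    ∑ i, d i * w i ≤ V (2 ^ J) * w 0 + ∑' k, V (2 ^ (k + J + 1)) * w (2 ^ (k + J)) := by
  classical
  rw [← Finset.sum_filter_add_sum_filter_not Finset.univ fun i : Fin N => (i : ℕ) < 2 ^ J]
  gcongr ?_ + ?_
  · set S := Finset.univ.filter fun i : Fin N => (i : ℕ) < 2 ^ J
    calc ∑ i ∈ S, d i * w i
        ≤ ∑ i ∈ S, d i * w 0 := by
          gcongr with i; exact hw (Nat.zero_le _)
      _ ≤ V (2 ^ J) * w 0 := by
          rw [← Finset.sum_mul]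
          gcongr
          exact hV _ _ (Finset.card_le_of_forall_val_lt fun i hi => (Finset.mem_filter.1 hi).2)
  · set S := Finset.univ.filter fun i : Fin N => ¬ (i : ℕ) < 2 ^ J
    have hlog : ∀ i ∈ S, J ≤ Nat.log 2 i ∧ (i : ℕ) ≠ 0 := fun i hi => by
      have : 2 ^ J ≤ (i : ℕ) := not_lt.1 (Finset.mem_filter.1 hi).2
      exact ⟨Nat.le_log_of_pow_le one_lt_two this,
        Nat.pos_iff_ne_zero.1 (Nat.one_le_two_pow.trans this)⟩
    have hmaps : ∀ i ∈ S, Nat.log 2 i - J ∈ Finset.range N := fun i _ =>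
      Finset.mem_range.2 ((Nat.sub_le _ _).trans_lt ((Nat.log_le_self 2 i).trans_lt i.isLt))
    rw [← Finset.sum_fiberwise_of_maps_to hmaps]
    refine le_trans (Finset.sum_le_sum fun k _ => ?_) (ENNReal.sum_le_tsum _)
    have hblock : ∀ i ∈ S.filter (fun i : Fin N => Nat.log 2 i - J = k),
        2 ^ (k + J) ≤ (i : ℕ) ∧ (i : ℕ) < 2 ^ (k + J + 1) := fun i hi => by
      obtain ⟨hiS, hik⟩ := Finset.mem_filter.1 hi
      obtain ⟨hJ, hi0⟩ := hlog i hiS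
      have hk : Nat.log 2 i = k + J := by omega
      exact ⟨hk ▸ Nat.pow_log_le_self 2 hi0, hk ▸ Nat.lt_pow_succ_log_self one_lt_two _⟩
    calc ∑ i ∈ S.filter (fun i : Fin N => Nat.log 2 i - J = k), d i * w i
        ≤ ∑ i ∈ S.filter (fun i : Fin N => Nat.log 2 i - J = k), d i * w (2 ^ (k + J)) := by
          gcongr with i hi; exact hw (hblock i hi).1
      _ ≤ V (2 ^ (k + J + 1)) * w (2 ^ (k + J)) := by
          rw [← Finset.sum_mul]
          gcongr
          exact hV _ _ (Finset.card_le_of_forall_val_lt fun i hi => (hblock i hi).2)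

theorem LamSharpV1_shift_rpow_le (f : ℝ → ℝ → ℝ) {δ : ℝ} (hδ : 0 ≤ δ) {n : ℕ} (hn : n ≠ 0)
    (J : ℕ) :
    LamSharpV1 (ShiftSeq (fun k => (k : ℝ) ^ δ) n) f ≤
      modSharpV1 f (2 ^ J) * ((n : ℝ≥0∞) ^ δ)⁻¹ +
        ∑' k, modSharpV1 f (2 ^ (k + J + 1)) * (((2 ^ (k + J) + n : ℕ) : ℝ≥0∞) ^ δ)⁻¹ := by
  refine iSup_le fun N => iSup_le fun I => iSup_le fun y => iSup_le fun hI => iSup_le fun hy => ?_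
  let w : ℕ → ℝ≥0∞ := fun k => (((k + n : ℕ) : ℝ≥0∞) ^ δ)⁻¹
  have hw : Antitone w := fun k l hkl =>
    ENNReal.inv_le_inv.2 (ENNReal.rpow_le_rpow (by gcongr) hδ)
  have hterm : ∀ i : Fin N,
      ENNReal.ofReal (|f (I i).2 (y i) - f (I i).1 (y i)| /
        ShiftSeq (fun k => (k : ℝ) ^ δ) n (i + 1)) =
      ENNReal.ofReal |f (I i).2 (y i) - f (I i).1 (y i)| * w i := fun i => by
    have hpos : (0 : ℝ) < (i + n : ℕ) := by positivity
    rw [ShiftSeq, show (i : ℕ) + 1 + n - 1 = i + n by omega,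
      ENNReal.ofReal_div_of_pos (Real.rpow_pos_of_pos hpos δ), div_eq_mul_inv,
      ← ENNReal.ofReal_rpow_of_nonneg hpos.le hδ, ENNReal.ofReal_natCast]
  rw [ENNReal.ofReal_sum_of_nonneg fun i _ => ?nonneg]
  case nonneg => exact div_nonneg (abs_nonneg _) (Real.rpow_nonneg (Nat.cast_nonneg _) δ)
  simp only [hterm]
  simpa [w] using sum_mul_le_dyadic _ hw (fun S M hS => sum_ofReal_le_modSharpV1 f hI hy hS) J

theorem inv_rpow_two_pow_add_le {δ : ℝ} (hδ : 0 ≤ δ) (j n : ℕ) :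
    (((2 ^ j + n : ℕ) : ℝ≥0∞) ^ δ)⁻¹ ≤ 2 ^ δ * (2 ^ (((j : ℝ) + 1) * δ))⁻¹ :=
  calc (((2 ^ j + n : ℕ) : ℝ≥0∞) ^ δ)⁻¹
      ≤ ((2 : ℝ≥0∞) ^ ((j : ℝ) * δ))⁻¹ := by
        rw [ENNReal.rpow_mul, ENNReal.rpow_natCast]
        gcongr
        push_cast
        exact le_self_add
    _ = 2 ^ δ * (2 ^ (((j : ℝ) + 1) * δ))⁻¹ := by
        rw [← ENNReal.rpow_neg, ← ENNReal.rpow_neg,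
          ← ENNReal.rpow_add _ _ two_ne_zero ENNReal.ofNat_ne_top]
        ring_nf

theorem tendsto_zero_of_forall_le_mul_add {α : Type*} {l : Filter α} {x u : α → ℝ≥0∞}
    {c t : ℕ → ℝ≥0∞} (hc : ∀ J, c J ≠ ⊤) (hu : Tendsto u l (𝓝 0))
    (ht : Tendsto t atTop (𝓝 0)) (h : ∀ᶠ n in l, ∀ J, x n ≤ c J * u n + t J) :
    Tendsto x l (𝓝 0) := by
  rw [ENNReal.tendsto_nhds_zero]
  intro ε hε
  have hε2 : 0 < ε / 2 := ENNReal.half_pos hε.ne'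
  obtain ⟨J, hJ⟩ := (ENNReal.tendsto_nhds_zero.1 ht _ hε2).exists
  have hcu : Tendsto (fun n => c J * u n) l (𝓝 0) := by
    simpa using ENNReal.Tendsto.const_mul hu (.inr (hc J))
  filter_upwards [h, ENNReal.tendsto_nhds_zero.1 hcu _ hε2] with n hn hcn
  calc x n ≤ c J * u n + t J := hn J
    _ ≤ ε / 2 + ε / 2 := add_le_add hcn hJ
    _ = ε := ENNReal.add_halves ε

theorem LamSharpV1_rpow_ne_top_and_tendsto (f : ℝ → ℝ → ℝ) {δ : ℝ} (hδ : 0 < δ)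
    (h : ∑' j : ℕ, modSharpV1 f (2 ^ (j + 1)) / (2 : ℝ≥0∞) ^ (((j : ℝ) + 1) * δ) ≠ ⊤) :
    LamSharpV1 (fun k => (k : ℝ) ^ δ) f ≠ ⊤ ∧
      Tendsto (fun n => LamSharpV1 (ShiftSeq (fun k => (k : ℝ) ^ δ) n) f) atTop (𝓝 0) := by
  set a : ℕ → ℝ≥0∞ := fun j => modSharpV1 f (2 ^ (j + 1)) / 2 ^ (((j : ℝ) + 1) * δ)
  have hbound : ∀ n ≠ 0, ∀ J, LamSharpV1 (ShiftSeq (fun k => (k : ℝ) ^ δ) n) f ≤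
      modSharpV1 f (2 ^ J) * ((n : ℝ≥0∞) ^ δ)⁻¹ + 2 ^ δ * ∑' k, a (k + J) := fun n hn J => by
    refine (LamSharpV1_shift_rpow_le f hδ.le hn J).trans (add_le_add le_rfl ?_)
    rw [← ENNReal.tsum_mul_left]
    refine ENNReal.tsum_le_tsum fun k => ?_
    calc modSharpV1 f (2 ^ (k + J + 1)) * (((2 ^ (k + J) + n : ℕ) : ℝ≥0∞) ^ δ)⁻¹
        ≤ modSharpV1 f (2 ^ (k + J + 1)) * (2 ^ δ * (2 ^ ((((k + J : ℕ) : ℝ) + 1) * δ))⁻¹) := by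
          gcongr; exact inv_rpow_two_pow_add_le hδ.le _ _
      _ = 2 ^ δ * a (k + J) := by simp only [a, div_eq_mul_inv]; ring
  have htwo : (2 : ℝ≥0∞) ^ δ ≠ ⊤ := ENNReal.rpow_ne_top_of_nonneg hδ.le ENNReal.ofNat_ne_top
  have hfin : ∀ J, modSharpV1 f (2 ^ J) ≠ ⊤ := fun J => by
    have hpow : (2 : ℝ≥0∞) ^ (((J : ℝ) + 1) * δ) ≠ ⊤ :=
      ENNReal.rpow_ne_top_of_nonneg (by positivity) ENNReal.ofNat_ne_top
    refine ne_top_of_le_ne_top ?_ (modSharpV1_mono f (Nat.pow_le_pow_right two_pos J.le_succ))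
    rw [← ENNReal.div_mul_cancel (ENNReal.rpow_pos two_pos ENNReal.ofNat_ne_top).ne' hpow
      (b := modSharpV1 f (2 ^ (J + 1)))]
    exact ENNReal.mul_ne_top (ENNReal.ne_top_of_tsum_ne_top h J) hpow
  refine ⟨ne_top_of_le_ne_top (ENNReal.add_ne_top.2 ⟨?_, ?_⟩) (hbound 1 one_ne_zero 0), ?_⟩
  · simpa using hfin 0
  · simpa using ENNReal.mul_ne_top htwo h
  refine tendsto_zero_of_forall_le_mul_add hfin ?_ ?_
    ((eventually_ne_atTop 0).mono fun n hn J => hbound n hn J)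
  · simpa using ((ENNReal.tendsto_rpow_at_top hδ).comp ENNReal.tendsto_nat_nhds_top).inv
  · simpa using ENNReal.Tendsto.const_mul (ENNReal.tendsto_sum_nat_add a h) (.inr htwo)

theorem modSharpV2_eq_modSharpV1_swap (f : ℝ → ℝ → ℝ) :
    modSharpV2 f = modSharpV1 (Function.swap f) := rfl

theorem LamSharpV2_eq_LamSharpV1_swap (Λ : ℕ → ℝ) (f : ℝ → ℝ → ℝ) :
    LamSharpV2 Λ f = LamSharpV1 Λ (Function.swap f) := rfl

theorem stmt10_general (α β : ℝ) (hab : α + β < 1)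
    (f : ℝ → ℝ → ℝ)
    (h1 : ∑' j : ℕ, modSharpV1 f (2 ^ (j + 1)) /
        (2 : ℝ≥0∞) ^ (((j : ℝ) + 1) * (1 - (α + β))) ≠ ⊤)
    (h2 : ∑' j : ℕ, modSharpV2 f (2 ^ (j + 1)) /
        (2 : ℝ≥0∞) ^ (((j : ℝ) + 1) * (1 - (α + β))) ≠ ⊤) :
    (LamSharpV1 (fun n => (n : ℝ) ^ (1 - (α + β))) f +
      LamSharpV2 (fun n => (n : ℝ) ^ (1 - (α + β))) f ≠ ⊤) ∧
    Tendsto (fun n : ℕ =>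
      LamSharpV1 (ShiftSeq (fun k => (k : ℝ) ^ (1 - (α + β))) n) f) atTop (nhds 0) ∧
    Tendsto (fun n : ℕ =>
      LamSharpV2 (ShiftSeq (fun k => (k : ℝ) ^ (1 - (α + β))) n) f) atTop (nhds 0) := by
  have hδ : 0 < 1 - (α + β) := by linarith
  obtain ⟨hfin₁, hlim₁⟩ := LamSharpV1_rpow_ne_top_and_tendsto f hδ h1
  rw [modSharpV2_eq_modSharpV1_swap] at h2
  obtain ⟨hfin₂, hlim₂⟩ := LamSharpV1_rpow_ne_top_and_tendsto (Function.swap f) hδ h2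
  simp only [LamSharpV2_eq_LamSharpV1_swap]
  exact ⟨ENNReal.add_ne_top.2 ⟨hfin₁, hfin₂⟩, hlim₁, hlim₂⟩

/-- if `α, β > 0`, `α + β < 1` and
`Σ_j v_s#(2^j, f)/2^{j(1-(α+β))} < ∞` for `s = 1,2`, then
`f ∈ C{n^{1-(α+β)}}#V`. -/
theorem stmt10 (α β : ℝ) (hα : 0 < α) (hβ : 0 < β) (hab : α + β < 1)
    (f : ℝ → ℝ → ℝ) (hper : Periodic2 f)
    (h1 : ∑' j : ℕ, modSharpV1 f (2 ^ (j + 1)) /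
        (2 : ℝ≥0∞) ^ (((j : ℝ) + 1) * (1 - (α + β))) ≠ ⊤)
    (h2 : ∑' j : ℕ, modSharpV2 f (2 ^ (j + 1)) /
        (2 : ℝ≥0∞) ^ (((j : ℝ) + 1) * (1 - (α + β))) ≠ ⊤) :
    (LamSharpV1 (fun n => (n : ℝ) ^ (1 - (α + β))) f +
      LamSharpV2 (fun n => (n : ℝ) ^ (1 - (α + β))) f ≠ ⊤) ∧
    Tendsto (fun n : ℕ =>
      LamSharpV1 (ShiftSeq (fun k => (k : ℝ) ^ (1 - (α + β))) n) f) atTop (nhds 0) ∧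
    Tendsto (fun n : ℕ =>
      LamSharpV2 (ShiftSeq (fun k => (k : ℝ) ^ (1 - (α + β))) n) f) atTop (nhds 0) :=
  stmt10_general α β hab f h1 h2
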